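/- arXiv:2304.01189 — 2 statements merged into one kernel-verified Lean document; each statement's English description precedes it below -/
import Mathlib

section
/- Let k ≥ 1 and d ∈ ℕ, let P ⊆ ℝ^k be a proper d-GAP, and let I ⊆ ℝ^k be a nonempty bounded convex set. Then for every x₀ ∈ ℝ^k, #{p ∈ P : x₀ − p ∈ I} · |P+I| ≤ 2^{k+d} · #P · |I|. -/
open Set Pointwise MeasureTheory ENNReal

/-- `P ⊆ ℝ^k` is a `d`-dimensional generalized arithmetic progression:
`P = {∑ i, λ i • a i : 1 ≤ λ i ≤ ℓ i}`. -/
def IsGAPR (k d : ℕ) (P : Set (Fin k → ℝ)) : Prop :=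
  ∃ (a : Fin d → (Fin k → ℝ)) (l : Fin d → ℕ), (∀ i, 1 ≤ l i) ∧
    P = (fun lam : Fin d → ℕ => ∑ i, (lam i : ℝ) • a i) ''
          {lam | ∀ i, 1 ≤ lam i ∧ lam i ≤ l i}

/-- `P ⊆ ℝ^k` is a proper `d`-GAP: the parametrisation is injective. -/
def IsProperGAPR (k d : ℕ) (P : Set (Fin k → ℝ)) : Prop :=
  ∃ (a : Fin d → (Fin k → ℝ)) (l : Fin d → ℕ), (∀ i, 1 ≤ l i) ∧
    P = (fun lam : Fin d → ℕ => ∑ i, (lam i : ℝ) • a i) ''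
          {lam | ∀ i, 1 ≤ lam i ∧ lam i ≤ l i} ∧
    Set.InjOn (fun lam : Fin d → ℕ => ∑ i, (lam i : ℝ) • a i)
      {lam | ∀ i, 1 ≤ lam i ∧ lam i ≤ l i}

/-- A parallelotope in `ℝ^k`: `{x₀ + ∑ i, λ i • v i : λ i ∈ [0,1]}`. -/
def IsParallelotope (k : ℕ) (Q : Set (Fin k → ℝ)) : Prop :=
  ∃ (x₀ : Fin k → ℝ) (v : Fin k → (Fin k → ℝ)),
    Q = (fun lam : Fin k → ℝ => x₀ + ∑ i, lam i • v i) '' (Set.Icc 0 1)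

/-!
Put `S = {p ∈ P | x₀ - p ∈ I}`. For `q ∈ P`, `y ∈ I` and `p ∈ S` we have
`q + y = (q + p - x₀) + (y + (x₀ - p)) ∈ (q + p - x₀) + (I + I)`, so every point of `P + I` lies in
at least `#S` of the translates `r - x₀ + (I + I)`, `r ∈ P + S`. Integrating the number of translates
containing a point gives `#S · |P + I| ≤ #(P + S) · |I + I|`. Convexity gives `I + I = 2 • I`, of
volume `2^k |I|`, and `P + S ⊆ P + P` is the image of the box `[2, 2ℓ]` of size at most `2^d #P`.
-/

open Module

section DoubleCounting

variable {α ι : Type*} [MeasurableSpace α] {μ : Measure α}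

open Classical in
theorem natCast_mul_measure_le_sum_measure (s : Finset ι) {C : ι → Set α}
    (hC : ∀ i ∈ s, NullMeasurableSet (C i) μ) {A : Set α} {m : ℕ}
    (hA : ∀ z ∈ A, m ≤ {i ∈ s | z ∈ C i}.card) :
    m * μ A ≤ ∑ i ∈ s, μ (C i) := by
  have hcount : ∀ z, (({i ∈ s | z ∈ C i}.card : ℕ) : ℝ≥0∞) = ∑ i ∈ s, (C i).indicator 1 z := by
    intro z
    simp [Set.indicator_apply, Finset.sum_boole]
  calc (m : ℝ≥0∞) * μ A ≤ m * μ {z | (m : ℝ≥0∞) ≤ ∑ i ∈ s, (C i).indicator 1 z} := by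
        gcongr
        intro z hz
        rw [mem_ofPred_eq, ← hcount]
        exact_mod_cast hA z hz
    _ ≤ ∫⁻ z, ∑ i ∈ s, (C i).indicator 1 z ∂μ :=
        mul_meas_ge_le_lintegral₀
          (Finset.aemeasurable_fun_sum s fun i hi => aemeasurable_const.indicator₀ (hC i hi)) _
    _ = ∑ i ∈ s, ∫⁻ z, (C i).indicator 1 z ∂μ :=
        lintegral_finsetSum' s fun i hi => aemeasurable_const.indicator₀ (hC i hi)
    _ = ∑ i ∈ s, μ (C i) :=
        Finset.sum_congr rfl fun i hi => lintegral_indicator_one₀ (hC i hi)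

end DoubleCounting

section ConvexBody

variable {E : Type*} [NormedAddCommGroup E] [NormedSpace ℝ E] [MeasurableSpace E] [BorelSpace E]
  [FiniteDimensional ℝ E] (μ : Measure E) [μ.IsAddHaarMeasure] {I : Set E}

theorem Convex.measure_add_self (hI : Convex ℝ I) : μ (I + I) = 2 ^ finrank ℝ E * μ I := by
  have hdouble : I + I = (2 : ℝ) • I := by
    rw [← one_add_one_eq_two, hI.add_smul zero_le_one zero_le_one, one_smul]
  rw [hdouble, Measure.addHaar_smul, abs_of_nonneg (by positivity), ENNReal.ofReal_pow zero_le_two,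
    ENNReal.ofReal_ofNat]

theorem ncard_mul_measure_add_le {P S : Set E} (hP : P.Finite) (hS : S.Finite) (hI : Convex ℝ I)
    {x₀ : E} (hSI : ∀ p ∈ S, x₀ - p ∈ I) :
    (S.ncard : ℝ≥0∞) * μ (P + I) ≤ (P + S).ncard * (2 ^ finrank ℝ E * μ I) := by
  classical
  set F := (hP.add hS).toFinset
  let C : E → Set E := fun r => (r - x₀) +ᵥ (I + I)
  have hcover : ∀ z ∈ P + I, S.ncard ≤ {r ∈ F | z ∈ C r}.card := by
    rintro _ ⟨q, hq, y, hy, rfl⟩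
    rw [ncard_eq_toFinset_card S hS, ← Finset.card_image_of_injective _ (add_right_injective q)]
    refine Finset.card_le_card fun r hr => ?_
    obtain ⟨p, hp, rfl⟩ := Finset.mem_image.1 hr
    rw [Finite.mem_toFinset] at hp
    refine Finset.mem_filter.2 ⟨(Finite.mem_toFinset _).2 (add_mem_add hq hp), ?_⟩
    exact ⟨y + (x₀ - p), add_mem_add hy (hSI p hp), by simp only [vadd_eq_add]; abel⟩
  calc (S.ncard : ℝ≥0∞) * μ (P + I) ≤ ∑ r ∈ F, μ (C r) :=
        natCast_mul_measure_le_sum_measure F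
          (fun r _ => ((hI.add hI).vadd _).nullMeasurableSet μ) hcover
    _ = (P + S).ncard * (2 ^ finrank ℝ E * μ I) := by
        simp only [C, measure_vadd, hI.measure_add_self μ, Finset.sum_const, nsmul_eq_mul,
          ncard_eq_toFinset_card _ (hP.add hS), F]

end ConvexBody

section GAP

variable {M : Type*} [AddCommMonoid M] [Module ℝ M] {k d : ℕ}

def gapHom (a : Fin d → M) : (Fin d → ℕ) →+ M where
  toFun lam := ∑ i, (lam i : ℝ) • a i
  map_zero' := by simp
  map_add' lam mu := by simp [add_smul, Finset.sum_add_distrib]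

theorem IsProperGAPR.exists_gapHom {P : Set (Fin k → ℝ)} (hP : IsProperGAPR k d P) :
    ∃ (a : Fin d → Fin k → ℝ) (l : Fin d → ℕ),
      P = gapHom a '' Icc 1 l ∧ InjOn (gapHom a) (Icc 1 l) := by
  obtain ⟨a, l, -, hPeq, hinj⟩ := hP
  have hbox : {lam : Fin d → ℕ | ∀ i, 1 ≤ lam i ∧ lam i ≤ l i} = Icc 1 l := by
    ext lam
    simp [Pi.le_def, forall_and]
  exact ⟨a, l, hbox ▸ hPeq, hbox ▸ hinj⟩

theorem IsProperGAPR.finite {P : Set (Fin k → ℝ)} (hP : IsProperGAPR k d P) : P.Finite := by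
  obtain ⟨a, l, rfl, -⟩ := hP.exists_gapHom
  exact (finite_Icc 1 l).image _

theorem ncard_Icc_two_add_le (l : Fin d → ℕ) :
    (Icc 2 (l + l)).ncard ≤ 2 ^ d * (Icc 1 l).ncard := by
  simp only [← Finset.coe_Icc, ncard_coe_finset, Pi.card_Icc, Nat.card_Icc]
  rw [← Fin.prod_const, ← Finset.prod_mul_distrib]
  exact Finset.prod_le_prod' fun i _ => by simp only [Pi.add_apply, Pi.ofNat_apply]; omega

theorem IsProperGAPR.ncard_add_self_le {P : Set (Fin k → ℝ)} (hP : IsProperGAPR k d P) :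
    (P + P).ncard ≤ 2 ^ d * P.ncard := by
  obtain ⟨a, l, rfl, hinj⟩ := hP.exists_gapHom
  rw [← image_add, hinj.ncard_image]
  calc (gapHom a '' (Icc 1 l + Icc 1 l)).ncard ≤ (Icc 1 l + Icc 1 l).ncard :=
        ncard_image_le ((finite_Icc 1 l).add (finite_Icc 1 l))
    _ ≤ (Icc 2 (l + l)).ncard := by
        rw [← one_add_one_eq_two]
        exact ncard_le_ncard (Icc_add_Icc_subset 1 l 1 l) (finite_Icc _ _)
    _ ≤ 2 ^ d * (Icc 1 l).ncard := ncard_Icc_two_add_le l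

end GAP

theorem stmt_10_general (k d : ℕ) (P : Set (Fin k → ℝ)) (hP : IsProperGAPR k d P)
    (I : Set (Fin k → ℝ))
    (hIc : Convex ℝ I) (x₀ : Fin k → ℝ) :
    ({p ∈ P | x₀ - p ∈ I}.ncard : ℝ≥0∞) * volume (P + I) ≤
      2 ^ (k + d) * (P.ncard : ℝ≥0∞) * volume I := by
  set S := {p ∈ P | x₀ - p ∈ I}
  have hS : S.Finite := hP.finite.subset (sep_subset _ _)
  have hcard : (P + S).ncard ≤ 2 ^ d * P.ncard :=
    (ncard_le_ncard (add_subset_add_left (sep_subset _ _)) (hP.finite.add hP.finite)).trans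
      hP.ncard_add_self_le
  calc (S.ncard : ℝ≥0∞) * volume (P + I)
      ≤ (P + S).ncard * (2 ^ finrank ℝ (Fin k → ℝ) * volume I) :=
        ncard_mul_measure_add_le volume hP.finite hS hIc fun p hp => hp.2
    _ ≤ ((2 ^ d * P.ncard : ℕ) : ℝ≥0∞) * (2 ^ k * volume I) := by
        rw [finrank_fin_fun]
        gcongr
    _ = 2 ^ (k + d) * (P.ncard : ℝ≥0∞) * volume I := by
        push_cast
        ring

theorem stmt_10 (k d : ℕ) (hk : 1 ≤ k) (P : Set (Fin k → ℝ)) (hP : IsProperGAPR k d P)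
    (I : Set (Fin k → ℝ)) (hIne : I.Nonempty) (hIb : Bornology.IsBounded I)
    (hIc : Convex ℝ I) (x₀ : Fin k → ℝ) :
    ({p ∈ P | x₀ - p ∈ I}.ncard : ℝ≥0∞) * volume (P + I) ≤
      2 ^ (k + d) * (P.ncard : ℝ≥0∞) * volume I :=
  stmt_10_general k d P hP I hIc x₀
end

section
/- Let X, Y ⊆ ℝ be nonempty bounded measurable sets with |co(Y)| ≥ |co(X)|. Then: (i) |X+Y| ≥ 2|X|; (ii) |X+Y| ≥ |X| + |co(Y)| + min{0, |X| − |co(Y) \ Y|}; and (iii) |X+Y| ≥ |co(X)| + |Y| + min{0, |X| − |co(Y) \ Y|}. -/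
/-!
By inner regularity, keeping two points near the ends of each set so that diameters are almost
preserved, it suffices to treat compact `K ⊆ X` and `L ⊆ Y`. Translate them into `[0, P]` and
reduce `E = K + L` modulo `P`. A point of `E mod P` lifts to a point of `E` whose translate by
`P` leaves `E`, whence `|E mod P| + |E ∩ (E - P)| ≤ |E|`. On the other hand Raikov's inequality
on the circle `ℝ/Pℤ`, `|(A + B) mod P| ≥ min(P, |A| + |B|)`, follows from Cauchy–Davenport in
`ℤ/p` by discretising at scale `P/p` and letting `p → ∞`.

For (ii) take `P = diam L`: as `0, P ∈ L`, the set `K` lies in `E ∩ (E - P)`. For (iii) take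
`P = diam K`: now `L` lies in `E ∩ (E - P)`, and Raikov is applied to `K` and `L mod P`, whose
measure is at least `P - |co L \ L|`. Part (i) follows from (ii).
-/

open Set Pointwise MeasureTheory Metric
open scoped ENNReal Finset

/-- Reduction modulo `P` into `[0, P)` of the part of `E` in `[0, ∞)`: the image of `E` on the
circle `ℝ/Pℤ`. -/
def wrap (P : ℝ) (E : Set ℝ) : Set ℝ := {x ∈ Ico 0 P | ∃ k : ℕ, x + k * P ∈ E}

section Wrap

variable {P : ℝ} {A B E F : Set ℝ}

lemma wrap_subset_Ico : wrap P E ⊆ Ico 0 P := fun _ hx => hx.1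

lemma wrap_mono (h : E ⊆ F) : wrap P E ⊆ wrap P F :=
  fun _ ⟨hx, k, hk⟩ => ⟨hx, k, h hk⟩

lemma mem_wrap_self {x : ℝ} (hx : x ∈ Ico 0 P) (hE : x ∈ E) : x ∈ wrap P E :=
  ⟨hx, 0, by simpa using hE⟩

lemma measurableSet_wrap (hE : MeasurableSet E) : MeasurableSet (wrap P E) := by
  simp only [wrap, ofPred_and, ofPred_exists]
  exact measurableSet_Ico.inter (.iUnion fun k => hE.preimage (measurable_add_const _))

lemma wrap_add_wrap_subset : wrap P (A + wrap P B) ⊆ wrap P (A + B) := by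
  rintro x ⟨hx, k, a, ha, y, ⟨-, j, hj⟩, hxy⟩
  refine ⟨hx, k + j, a, ha, y + j * P, hj, ?_⟩
  push_cast
  linarith

lemma pairwise_disjoint_Ico_mul (hP : 0 < P) :
    Pairwise fun i j : ℕ => Disjoint (Ico (i * P) (i * P + P)) (Ico (j * P) (j * P + P)) := by
  intro i j hij
  rw [Set.disjoint_left]
  rintro x ⟨hi, hi'⟩ ⟨hj, hj'⟩
  rcases hij.lt_or_gt with h | h
  · have : ((i : ℝ) + 1) * P ≤ j * P := by gcongr; exact_mod_cast h
    linarith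
  · have : ((j : ℝ) + 1) * P ≤ i * P := by gcongr; exact_mod_cast h
    linarith

lemma volume_wrap_le (hP : 0 < P) (hE : MeasurableSet E) : volume (wrap P E) ≤ volume E := by
  have hcover : wrap P E ⊆ ⋃ k : ℕ, (· + k * P) ⁻¹' (E ∩ Ico (k * P) (k * P + P)) := by
    rintro x ⟨⟨hx0, hxP⟩, k, hk⟩
    exact mem_iUnion.2 ⟨k, hk, by linarith, by linarith⟩
  calc volume (wrap P E)
      ≤ ∑' k : ℕ, volume ((· + k * P) ⁻¹' (E ∩ Ico (k * P) (k * P + P))) :=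
        (measure_mono hcover).trans (measure_iUnion_le _)
    _ = volume (⋃ k : ℕ, E ∩ Ico (k * P) (k * P + P)) := by
        simp_rw [measure_preimage_add_right]
        exact (measure_iUnion (fun i j hij => ((pairwise_disjoint_Ico_mul hP) hij).mono
          inter_subset_right inter_subset_right) fun k => hE.inter measurableSet_Ico).symm
    _ ≤ volume E := measure_mono (iUnion_subset fun _ => inter_subset_left)

lemma wrap_subset_wrap_diff (hP : 0 < P) (hE : BddAbove E) :
    wrap P E ⊆ wrap P (E \ (· + P) ⁻¹' E) := by
  rintro x ⟨hx, k₀, hk₀⟩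
  -- the largest lift of `x` to `E` works
  obtain ⟨M, hM⟩ := hE
  set S : Set ℕ := {k | x + k * P ∈ E}
  have hS : BddAbove S := ⟨⌈M / P⌉₊, fun k hk => by
    have : (k : ℝ) * P ≤ M := by linarith [hM hk, hx.1]
    exact_mod_cast (le_div_iff₀ hP).2 this |>.trans (Nat.le_ceil _)⟩
  have hmem : sSup S ∈ S := Nat.sSup_mem ⟨k₀, hk₀⟩ hS
  refine ⟨hx, sSup S, hmem, fun hnext => ?_⟩
  have : sSup S + 1 ∈ S := by
    simp only [S, mem_ofPred_eq, Nat.cast_add, Nat.cast_one]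
    simpa [add_mul, add_assoc] using hnext
  exact (le_csSup hS this).not_gt (Nat.lt_succ_self _)

lemma volume_wrap_add_volume_inter_le (hP : 0 ≤ P) (hE : MeasurableSet E) (hEb : BddAbove E) :
    volume (wrap P E) + volume (E ∩ (· + P) ⁻¹' E) ≤ volume E := by
  rcases hP.eq_or_lt with rfl | hP
  · simp [wrap]
  calc volume (wrap P E) + volume (E ∩ (· + P) ⁻¹' E)
      ≤ volume (E \ (· + P) ⁻¹' E) + volume (E ∩ (· + P) ⁻¹' E) := by
        gcongr ?_ + _
        exact (measure_mono (wrap_subset_wrap_diff hP hEb)).trans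
          (volume_wrap_le hP (hE.diff (hE.preimage (measurable_add_const P))))
    _ = volume E := measure_sdiff_add_inter _ (hE.preimage (measurable_add_const P))

end Wrap

section Discretization

open Classical in
/-- The cells `[i h, i h + h]` tiling `[0, p h]` that meet `S`, indexed by `ZMod p` so that
Cauchy–Davenport applies. -/
noncomputable def cellsMeeting (p : ℕ) [NeZero p] (h : ℝ) (S : Set ℝ) : Finset (ZMod p) :=
  Finset.univ.filter fun i => (S ∩ Icc (i.val * h) (i.val * h + h)).Nonempty

variable {p : ℕ} [NeZero p] {h : ℝ} {A B S : Set ℝ}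

lemma mem_cellsMeeting {i : ZMod p} :
    i ∈ cellsMeeting p h S ↔ (S ∩ Icc (i.val * h) (i.val * h + h)).Nonempty := by
  simp [cellsMeeting]

lemma exists_mem_cell (hh : 0 < h) {x : ℝ} (hx : x ∈ Icc 0 (p * h)) :
    ∃ i : ZMod p, x ∈ Icc (i.val * h) (i.val * h + h) := by
  have hp := NeZero.one_le (n := p)
  have hfloor : (⌊x / h⌋₊ : ℝ) * h ≤ x :=
    (le_div_iff₀ hh).1 (Nat.floor_le (div_nonneg hx.1 hh.le))
  rcases le_total ⌊x / h⌋₊ (p - 1) with hle | hle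
  · refine ⟨⌊x / h⌋₊, ?_⟩
    rw [ZMod.val_natCast_of_lt (by omega)]
    refine ⟨hfloor, ?_⟩
    have := (div_lt_iff₀ hh).1 (Nat.lt_floor_add_one (x / h))
    linarith
  · refine ⟨(p - 1 : ℕ), ?_⟩
    rw [ZMod.val_natCast_of_lt (by omega)]
    have hcast : ((p - 1 : ℕ) : ℝ) = p - 1 := by rw [Nat.cast_sub hp, Nat.cast_one]
    have : ((p - 1 : ℕ) : ℝ) * h ≤ ⌊x / h⌋₊ * h := by gcongr
    constructor <;> nlinarith [hx.2]

lemma cellsMeeting_nonempty (hh : 0 < h) (hS : S ⊆ Icc 0 (p * h)) (hne : S.Nonempty) :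
    (cellsMeeting p h S).Nonempty := by
  obtain ⟨x, hx⟩ := hne
  obtain ⟨i, hi⟩ := exists_mem_cell hh (hS hx)
  exact ⟨i, mem_cellsMeeting.2 ⟨x, hx, hi⟩⟩

lemma volume_le_card_cellsMeeting_mul (hh : 0 < h) (hS : S ⊆ Icc 0 (p * h)) :
    volume S ≤ #(cellsMeeting p h S) * ENNReal.ofReal h := by
  have hcover : S ⊆ ⋃ i ∈ cellsMeeting p h S, Icc ((i.val : ℝ) * h) (i.val * h + h) := by
    intro x hx
    obtain ⟨i, hi⟩ := exists_mem_cell hh (hS hx)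
    exact mem_biUnion (mem_cellsMeeting.2 ⟨x, hx, hi⟩) hi
  calc volume S ≤ ∑ i ∈ cellsMeeting p h S, volume (Icc ((i.val : ℝ) * h) (i.val * h + h)) :=
        (measure_mono hcover).trans (measure_biUnion_finset_le _ _)
    _ = #(cellsMeeting p h S) * ENNReal.ofReal h := by simp

lemma Ico_add_subset_wrap_cthickening (hh : 0 < h) {i j : ZMod p}
    (hi : i ∈ cellsMeeting p h A) (hj : j ∈ cellsMeeting p h B) :
    Ico ((i + j).val * h) ((i + j).val * h + h) ⊆
      wrap (p * h) (cthickening (2 * h) (A + B)) := by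
  obtain ⟨a, ha, ha₁, ha₂⟩ := mem_cellsMeeting.1 hi
  obtain ⟨b, hb, hb₁, hb₂⟩ := mem_cellsMeeting.1 hj
  set e := (i.val + j.val) / p
  -- reduction modulo `p` of the index sum `i.val + j.val` is a shift by `e p h`
  have hshift : ((i + j).val : ℝ) + e * p = i.val + j.val := by
    rw [ZMod.val_add]; exact_mod_cast (Nat.mod_add_div' _ p)
  have hlt : ((i + j).val : ℝ) + 1 ≤ p := by exact_mod_cast (ZMod.val_lt (i + j))
  rintro x ⟨hx₁, hx₂⟩
  refine ⟨⟨(by positivity : (0 : ℝ) ≤ _).trans hx₁, by nlinarith⟩, e, ?_⟩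
  refine mem_cthickening_of_dist_le _ (a + b) _ _ (add_mem_add ha hb) ?_
  rw [Real.dist_eq, abs_sub_le_iff]
  constructor <;> nlinarith

lemma card_mul_le_volume_wrap_cthickening (hh : 0 < h) :
    (#(cellsMeeting p h A + cellsMeeting p h B) : ℝ≥0∞) * ENNReal.ofReal h ≤
      volume (wrap (p * h) (cthickening (2 * h) (A + B))) := by
  set s := cellsMeeting p h A + cellsMeeting p h B
  have hdisj : (s : Set (ZMod p)).PairwiseDisjoint
      fun c => Ico ((c.val : ℝ) * h) (c.val * h + h) :=
    fun c _ c' _ hcc' => pairwise_disjoint_Ico_mul hh fun hv => hcc' (ZMod.val_injective p hv)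
  calc (#s : ℝ≥0∞) * ENNReal.ofReal h
      = volume (⋃ c ∈ s, Ico ((c.val : ℝ) * h) (c.val * h + h)) := by
        rw [measure_biUnion_finset hdisj fun _ _ => measurableSet_Ico]; simp
    _ ≤ _ := by
        refine measure_mono (iUnion₂_subset fun c hc => ?_)
        obtain ⟨i, hi, j, hj, rfl⟩ := Finset.mem_add.1 hc
        exact Ico_add_subset_wrap_cthickening hh hi hj

lemma min_le_volume_wrap_cthickening_add [Fact p.Prime] (hh : 0 < h) (hA : A ⊆ Icc 0 (p * h))
    (hB : B ⊆ Icc 0 (p * h)) (hAne : A.Nonempty) (hBne : B.Nonempty) :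
    min (ENNReal.ofReal (p * h)) (volume A + volume B) ≤
      volume (wrap (p * h) (cthickening (2 * h) (A + B))) + ENNReal.ofReal h := by
  set A' := cellsMeeting p h A
  set B' := cellsMeeting p h B
  have hA' := cellsMeeting_nonempty hh hA hAne
  have hB' := cellsMeeting_nonempty hh hB hBne
  have hcount : min p (#A' + #B') ≤ #(A' + B') + 1 := by
    have hCD : min p (#A' + #B' - 1) ≤ #(A' + B') := ZMod.cauchy_davenport Fact.out hA' hB'
    have := hA'.card_pos
    omega
  calc min (ENNReal.ofReal (p * h)) (volume A + volume B)
      ≤ ((min p (#A' + #B') : ℕ) : ℝ≥0∞) * ENNReal.ofReal h := by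
        rcases le_total p (#A' + #B') with hle | hle
        · rw [min_eq_left hle, ENNReal.ofReal_mul (by positivity), ENNReal.ofReal_natCast]
          exact min_le_left _ _
        · rw [min_eq_right hle, Nat.cast_add, add_mul]
          exact (min_le_right _ _).trans (add_le_add (volume_le_card_cellsMeeting_mul hh hA)
            (volume_le_card_cellsMeeting_mul hh hB))
    _ ≤ ((#(A' + B') + 1 : ℕ) : ℝ≥0∞) * ENNReal.ofReal h := by gcongr
    _ ≤ _ := by
        rw [Nat.cast_add_one, add_mul, one_mul]
        gcongr
        exact card_mul_le_volume_wrap_cthickening hh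

end Discretization

lemma MeasurableSet.exists_isCompact_finite_subset_lt_add {α : Type*} [MeasurableSpace α]
    [TopologicalSpace α] {μ : Measure α} [μ.InnerRegularCompactLTTop] {A F : Set α}
    (hA : MeasurableSet A) (hμA : μ A ≠ ∞) (hF : F.Finite) (hFA : F ⊆ A) {ε : ℝ≥0∞}
    (hε : ε ≠ 0) : ∃ K, F ⊆ K ∧ K ⊆ A ∧ IsCompact K ∧ μ A < μ K + ε := by
  obtain ⟨K, hKA, hK, hμK⟩ := hA.exists_isCompact_lt_add hμA hε
  refine ⟨K ∪ F, subset_union_right, union_subset hKA hFA, hK.union hF.isCompact,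
    hμK.trans_le ?_⟩
  gcongr
  exact subset_union_left

section Raikov

variable {P : ℝ} {A B C : Set ℝ}

lemma iInter_wrap_cthickening_subset (hP : 0 < P) (hC : IsClosed C)
    (hCb : Bornology.IsBounded C) :
    ⋂ n : ℕ, wrap P (cthickening (1 / (n + 1)) C) ⊆ wrap P C := by
  obtain ⟨M, hM⟩ := (hCb.cthickening (δ := 1)).bddAbove
  let S : Fin (⌈M / P⌉₊ + 1) → ℕ → Set ℝ := fun k n =>
    {x ∈ Ico 0 P | x + k * P ∈ cthickening (1 / (n + 1)) C}
  have hS : ∀ k, Antitone (S k) := fun k m n hmn x ⟨hx, hxk⟩ =>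
    ⟨hx, cthickening_mono (by gcongr) _ hxk⟩
  -- only the finitely many shifts `k ≤ M / P` reach the thickenings, so `⋂` and `⋃` commute
  have hsub : ⋂ n : ℕ, wrap P (cthickening (1 / (n + 1)) C) ⊆ ⋂ n, ⋃ k, S k n := by
    refine iInter_mono fun n x ⟨hx, k, hk⟩ => mem_iUnion.2 ⟨⟨k, ?_⟩, hx, hk⟩
    have hkM : k * P ≤ M := by
      have : (1 : ℝ) / (n + 1) ≤ 1 := by rw [div_le_one (by positivity)]; linarith
      linarith [hM (cthickening_mono this _ hk), hx.1]
    have : (k : ℝ) ≤ ⌈M / P⌉₊ := ((le_div_iff₀ hP).2 hkM).trans (Nat.le_ceil _)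
    exact Nat.lt_succ_of_le (by exact_mod_cast this)
  rw [iInter_iUnion_of_antitone hS] at hsub
  intro x hx
  obtain ⟨k, hk⟩ := mem_iUnion.1 (hsub hx)
  refine ⟨(mem_iInter.1 hk 0).1, k, ?_⟩
  rw [← hC.closure_eq, closure_eq_iInter_cthickening' C (range fun n : ℕ => 1 / (n + 1))]
  · simpa [S] using fun n => (mem_iInter.1 hk n).2
  · intro ε hε
    obtain ⟨n, hn⟩ := exists_nat_one_div_lt hε
    exact ⟨_, mem_range_self n, by positivity, hn.le⟩

lemma min_le_volume_wrap_add_of_isCompact (hP : 0 < P) (hA : IsCompact A) (hB : IsCompact B)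
    (hAs : A ⊆ Icc 0 P) (hBs : B ⊆ Icc 0 P) (hAne : A.Nonempty) (hBne : B.Nonempty) :
    min (ENNReal.ofReal P) (volume A + volume B) ≤ volume (wrap P (A + B)) := by
  let F : ℕ → Set ℝ := fun n => wrap P (cthickening (1 / (n + 1)) (A + B))
  have hF : Filter.Tendsto (fun n => volume (F n) + ENNReal.ofReal (1 / (n + 1))) Filter.atTop
      (nhds (volume (⋂ n, F n) + 0)) := by
    refine (tendsto_measure_iInter_atTop
      (fun n => (measurableSet_wrap isClosed_cthickening.measurableSet).nullMeasurableSet)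
      (fun m n hmn => wrap_mono (cthickening_mono (by gcongr) _))
      ⟨0, ((measure_mono wrap_subset_Ico).trans_lt measure_Ico_lt_top).ne⟩).add ?_
    rw [← ENNReal.ofReal_zero]
    exact ENNReal.tendsto_ofReal tendsto_one_div_add_atTop_nhds_zero_nat
  rw [add_zero] at hF
  refine (ge_of_tendsto hF (Filter.Eventually.of_forall fun n => ?_)).trans (measure_mono
    (iInter_wrap_cthickening_subset hP (hA.add hB).isClosed (hA.add hB).isBounded))
  obtain ⟨p, hpn, hp⟩ := Nat.exists_infinite_primes ⌈2 * P * (n + 1)⌉₊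
  have := Fact.mk hp
  have hp0 : (0 : ℝ) < p := by exact_mod_cast hp.pos
  have hpP : (p : ℝ) * (P / p) = P := mul_div_cancel₀ _ hp0.ne'
  have hsmall : 2 * (P / p) ≤ 1 / (n + 1) := by
    have : 2 * P * (n + 1) ≤ p := (Nat.le_ceil _).trans (by exact_mod_cast hpn)
    rw [le_div_iff₀ (by positivity)]
    calc 2 * (P / p) * (n + 1) = 2 * P * (n + 1) / p := by ring
      _ ≤ 1 := by rwa [div_le_one hp0]
  have key := min_le_volume_wrap_cthickening_add (p := p) (div_pos hP hp0)
    (by rwa [hpP]) (by rwa [hpP]) hAne hBne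
  rw [hpP] at key
  refine key.trans (add_le_add (measure_mono (wrap_mono (cthickening_mono hsmall _)))
    (ENNReal.ofReal_le_ofReal ?_))
  linarith [div_pos hP hp0]

theorem min_le_volume_wrap_add (hA : MeasurableSet A) (hB : MeasurableSet B)
    (hAs : A ⊆ Icc 0 P) (hBs : B ⊆ Icc 0 P) (hAne : A.Nonempty) (hBne : B.Nonempty) :
    min (ENNReal.ofReal P) (volume A + volume B) ≤ volume (wrap P (A + B)) := by
  obtain ⟨a, ha⟩ := hAne
  obtain ⟨b, hb⟩ := hBne
  rcases ((hAs ha).1.trans (hAs ha).2).eq_or_lt with rfl | hP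
  · simp
  refine ENNReal.le_of_forall_pos_le_add fun ε hε _ => ?_
  have hε2 : (ε / 2 : ℝ≥0∞) ≠ 0 := (ENNReal.half_pos (by exact_mod_cast hε.ne')).ne'
  have hfin : ∀ {S : Set ℝ}, S ⊆ Icc 0 P → volume S ≠ ∞ :=
    fun h => ((measure_mono h).trans_lt measure_Icc_lt_top).ne
  obtain ⟨K, haK, hKA, hK, hAK⟩ := hA.exists_isCompact_finite_subset_lt_add (hfin hAs)
    (finite_singleton a) (singleton_subset_iff.2 ha) hε2
  obtain ⟨L, hbL, hLB, hL, hBL⟩ := hB.exists_isCompact_finite_subset_lt_add (hfin hBs)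
    (finite_singleton b) (singleton_subset_iff.2 hb) hε2
  calc min (ENNReal.ofReal P) (volume A + volume B)
      ≤ min (ENNReal.ofReal P + ε) (volume K + volume L + ε) := by
        refine min_le_min le_self_add ?_
        calc volume A + volume B ≤ volume K + ε / 2 + (volume L + ε / 2) :=
              add_le_add hAK.le hBL.le
          _ = volume K + volume L + ε := by rw [add_add_add_comm, ENNReal.add_halves]
    _ = min (ENNReal.ofReal P) (volume K + volume L) + ε := min_add_add_right _ _ _
    _ ≤ volume (wrap P (A + B)) + ε := by
        gcongr
        exact (min_le_volume_wrap_add_of_isCompact hP hK hL (hKA.trans hAs) (hLB.trans hBs)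
          ⟨a, haK rfl⟩ ⟨b, hbL rfl⟩).trans
          (measure_mono (wrap_mono (add_subset_add hKA hLB)))

end Raikov

section Normalized

variable {P Q : ℝ} {K L : Set ℝ}

lemma wrap_nonempty (hP : 0 < P) {l : ℝ} (hl : l ∈ L) (hl0 : 0 ≤ l) : (wrap P L).Nonempty := by
  have h₁ : (⌊l / P⌋₊ : ℝ) * P ≤ l := (le_div_iff₀ hP).1 (Nat.floor_le (div_nonneg hl0 hP.le))
  have h₂ : l < (⌊l / P⌋₊ + 1) * P := (div_lt_iff₀ hP).1 (Nat.lt_floor_add_one _)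
  exact ⟨l - ⌊l / P⌋₊ * P, ⟨by linarith, by linarith⟩, ⌊l / P⌋₊, by simpa using hl⟩

lemma min_add_volume_le_volume_add (hK : IsCompact K) (hL : IsCompact L) (hKne : K.Nonempty)
    (hKs : K ⊆ Icc 0 P) (hLs : L ⊆ Icc 0 P) (hL0 : 0 ∈ L) (hLP : P ∈ L) :
    min (ENNReal.ofReal P) (volume K + volume L) + volume K ≤ volume (K + L) := by
  have hE := hK.add hL
  calc min (ENNReal.ofReal P) (volume K + volume L) + volume K
      ≤ volume (wrap P (K + L)) + volume ((K + L) ∩ (· + P) ⁻¹' (K + L)) := by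
        gcongr
        · exact min_le_volume_wrap_add hK.measurableSet hL.measurableSet hKs hLs hKne ⟨0, hL0⟩
        · exact fun x hx => ⟨by simpa using add_mem_add hx hL0, add_mem_add hx hLP⟩
    _ ≤ volume (K + L) :=
        volume_wrap_add_volume_inter_le (hLs hL0).2 hE.measurableSet hE.bddAbove

lemma min_add_volume_wrap_add_le_volume_add (hK : IsCompact K) (hL : IsCompact L)
    (hKs : K ⊆ Icc 0 P) (hK0 : 0 ∈ K) (hKP : P ∈ K) (hLs : L ⊆ Ici 0) (hLne : L.Nonempty) :
    min (ENNReal.ofReal P) (volume K + volume (wrap P L)) + volume L ≤ volume (K + L) := by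
  have hE := hK.add hL
  rcases (hKs hKP).1.eq_or_lt with rfl | hP
  · simpa using measure_mono fun x hx => by simpa using add_mem_add hK0 hx
  obtain ⟨l, hl⟩ := hLne
  calc min (ENNReal.ofReal P) (volume K + volume (wrap P L)) + volume L
      ≤ volume (wrap P (K + L)) + volume ((K + L) ∩ (· + P) ⁻¹' (K + L)) := by
        gcongr
        · refine (min_le_volume_wrap_add hK.measurableSet (measurableSet_wrap hL.measurableSet)
            hKs (wrap_subset_Ico.trans Ico_subset_Icc_self) ⟨0, hK0⟩
            (wrap_nonempty hP hl (hLs hl))).trans (measure_mono wrap_add_wrap_subset)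
        · exact fun x hx => ⟨by simpa using add_mem_add hK0 hx, by
            simpa [add_comm] using add_mem_add hKP hx⟩
    _ ≤ volume (K + L) := volume_wrap_add_volume_inter_le hP.le hE.measurableSet hE.bddAbove

lemma ofReal_le_volume_wrap_add_volume_diff (P Q : ℝ) (L : Set ℝ) :
    ENNReal.ofReal P ≤ volume (wrap P L) + volume (Icc 0 Q \ L) + ENNReal.ofReal (P - Q) := by
  have hcover : Ico 0 P ⊆ wrap P L ∪ (Icc 0 Q \ L) ∪ Ico Q P := by
    intro θ hθ
    by_cases hθL : θ ∈ L
    · exact Or.inl (Or.inl (mem_wrap_self hθ hθL))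
    by_cases hθQ : θ ≤ Q
    · exact Or.inl (Or.inr ⟨⟨hθ.1, hθQ⟩, hθL⟩)
    · exact Or.inr ⟨le_of_not_ge hθQ, hθ.2⟩
  calc ENNReal.ofReal P = volume (Ico 0 P) := by rw [Real.volume_Ico, sub_zero]
    _ ≤ volume (wrap P L) + volume (Icc 0 Q \ L) + volume (Ico Q P) :=
        (measure_mono hcover).trans ((measure_union_le _ _).trans
          (add_le_add_left (measure_union_le _ _) _))
    _ = _ := by rw [Real.volume_Ico]

end Normalized

lemma ENNReal.min_toReal_add_add_le {p : ℝ} {a b c d : ℝ≥0∞} (hp : 0 ≤ p) (ha : a ≠ ∞)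
    (hb : b ≠ ∞) (hc : c ≠ ∞) (hd : d ≠ ∞) (h : min (ENNReal.ofReal p) (a + b) + c ≤ d) :
    min p (a.toReal + b.toReal) + c.toReal ≤ d.toReal := by
  have hmin : min (ENNReal.ofReal p) (a + b) ≠ ∞ :=
    ne_top_of_le_ne_top ENNReal.ofReal_ne_top (min_le_left _ _)
  have := ENNReal.toReal_mono hd h
  rwa [ENNReal.toReal_add hmin hc, ENNReal.toReal_min ENNReal.ofReal_ne_top
    (ENNReal.add_ne_top.2 ⟨ha, hb⟩), ENNReal.toReal_add ha hb, ENNReal.toReal_ofReal hp] at this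

section Compact

variable {K L : Set ℝ}

lemma neg_vadd_subset_Icc {a Q : ℝ} (h : K ⊆ Icc a (a + Q)) : -a +ᵥ K ⊆ Icc 0 Q := by
  rintro _ ⟨x, hx, rfl⟩
  have := h hx
  exact ⟨by simp [vadd_eq_add]; linarith [this.1], by simp [vadd_eq_add]; linarith [this.2]⟩

lemma volume_vadd_add_vadd (c d : ℝ) (K L : Set ℝ) :
    volume ((c +ᵥ K) + (d +ᵥ L)) = volume (K + L) := by
  rw [vadd_add_assoc, add_vadd_comm, vadd_vadd, measure_vadd]

lemma IsCompact.subset_Icc_sInf_add_diam (hK : IsCompact K) :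
    K ⊆ Icc (sInf K) (sInf K + diam K) := fun x hx => by
  rw [Real.diam_eq hK.isBounded]
  exact ⟨csInf_le hK.bddBelow hx, by linarith [le_csSup hK.bddAbove hx]⟩

lemma IsCompact.zero_mem_neg_sInf_vadd (hK : IsCompact K) (hne : K.Nonempty) :
    (0 : ℝ) ∈ -sInf K +ᵥ K :=
  ⟨sInf K, hK.sInf_mem hne, neg_add_cancel _⟩

lemma IsCompact.diam_mem_neg_sInf_vadd (hK : IsCompact K) (hne : K.Nonempty) :
    diam K ∈ -sInf K +ᵥ K :=
  ⟨sSup K, hK.sSup_mem hne, by simp only [Real.diam_eq hK.isBounded, vadd_eq_add]; ring⟩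

lemma IsCompact.measureReal_le_measureReal_inter_Icc_add (hK : IsCompact K) (D : ℝ) :
    volume.real K ≤ volume.real (K ∩ Icc (sInf K) (sInf K + D)) + max 0 (diam K - D) := by
  have hcover : K ⊆ (K ∩ Icc (sInf K) (sInf K + D)) ∪ Ioc (sInf K + D) (sInf K + diam K) :=
    fun x hx => by
      have hx' := hK.subset_Icc_sInf_add_diam hx
      by_cases hxD : x ≤ sInf K + D
      · exact Or.inl ⟨hx, hx'.1, hxD⟩
      · exact Or.inr ⟨lt_of_not_ge hxD, hx'.2⟩
  calc volume.real K
      ≤ volume.real (K ∩ Icc (sInf K) (sInf K + D)) +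
          volume.real (Ioc (sInf K + D) (sInf K + diam K)) :=
        (measureReal_mono hcover (measure_union_lt_top (hK.inter_right isClosed_Icc).measure_lt_top
          measure_Ioc_lt_top).ne).trans (measureReal_union_le _ _)
    _ = _ := by rw [Real.volume_real_Ioc, max_comm]; ring_nf

lemma measureReal_add_diam_add_min_le_of_isCompact (hK : IsCompact K) (hL : IsCompact L)
    (hKne : K.Nonempty) (hLne : L.Nonempty) :
    volume.real K + diam L + min 0 (volume.real K - (diam L - volume.real L)) ≤
      volume.real (K + L) + 2 * max 0 (diam K - diam L) := by
  set m := sInf K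
  set K₁ := K ∩ Icc m (m + diam L)
  have hK₁ : IsCompact K₁ := hK.inter_right isClosed_Icc
  have hmK₁ : m ∈ K₁ := ⟨hK.sInf_mem hKne, le_rfl, le_add_of_nonneg_right diam_nonneg⟩
  have hcut := hK.measureReal_le_measureReal_inter_Icc_add (diam L)
  have hmain := min_add_volume_le_volume_add (hK₁.vadd (-m)) (hL.vadd (-sInf L))
    ⟨_, vadd_mem_vadd_set hmK₁⟩ (neg_vadd_subset_Icc inter_subset_right)
    (neg_vadd_subset_Icc hL.subset_Icc_sInf_add_diam) (hL.zero_mem_neg_sInf_vadd hLne)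
    (hL.diam_mem_neg_sInf_vadd hLne)
  rw [measure_vadd, measure_vadd, volume_vadd_add_vadd] at hmain
  have hreal := ENNReal.min_toReal_add_add_le diam_nonneg hK₁.measure_ne_top hL.measure_ne_top
    hK₁.measure_ne_top (hK.add hL).measure_ne_top
    (hmain.trans (measure_mono (add_subset_add_right inter_subset_left)))
  simp only [← measureReal_def] at hreal
  rcases min_cases (diam L) (volume.real K₁ + volume.real L) with ⟨h, -⟩ | ⟨h, -⟩ <;>
  · rw [h] at hreal
    linarith [le_max_left 0 (diam K - diam L),
      min_le_left 0 (volume.real K - (diam L - volume.real L)),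
      min_le_right 0 (volume.real K - (diam L - volume.real L))]

lemma diam_add_measureReal_add_min_le_of_isCompact (hK : IsCompact K) (hL : IsCompact L)
    (hKne : K.Nonempty) (hLne : L.Nonempty) :
    diam K + volume.real L + min 0 (volume.real K - (diam L - volume.real L)) ≤
      volume.real (K + L) + max 0 (diam K - diam L) := by
  set L' := -sInf L +ᵥ L
  have hL's : L' ⊆ Icc 0 (diam L) := neg_vadd_subset_Icc hL.subset_Icc_sInf_add_diam
  have hmain := min_add_volume_wrap_add_le_volume_add (hK.vadd (-sInf K)) (hL.vadd (-sInf L))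
    (neg_vadd_subset_Icc hK.subset_Icc_sInf_add_diam) (hK.zero_mem_neg_sInf_vadd hKne)
    (hK.diam_mem_neg_sInf_vadd hKne) (hL's.trans Icc_subset_Ici_self) hLne.vadd_set
  rw [measure_vadd, measure_vadd, volume_vadd_add_vadd] at hmain
  set W := volume.real (wrap (diam K) L')
  have hWfin : volume (wrap (diam K) L') ≠ ⊤ :=
    ((measure_mono wrap_subset_Ico).trans_lt measure_Ico_lt_top).ne
  have hgapfin : volume (Icc 0 (diam L) \ L') ≠ ⊤ :=
    ((measure_mono sdiff_subset).trans_lt measure_Icc_lt_top).ne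
  have hgap : volume.real (Icc 0 (diam L) \ L') = diam L - volume.real L := by
    rw [measureReal_sdiff hL's (hL.vadd _).measurableSet measure_Icc_lt_top.ne,
      Real.volume_real_Icc, sub_zero, max_eq_left diam_nonneg, measureReal_def, measure_vadd,
      ← measureReal_def]
  have hW : diam K ≤ W + (diam L - volume.real L) + max 0 (diam K - diam L) := by
    have h := ENNReal.toReal_mono (by simp [hWfin, hgapfin])
      (ofReal_le_volume_wrap_add_volume_diff (diam K) (diam L) L')
    rwa [ENNReal.toReal_add (by simp [hWfin, hgapfin]) ENNReal.ofReal_ne_top,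
      ENNReal.toReal_add hWfin hgapfin, ENNReal.toReal_ofReal diam_nonneg,
      ENNReal.toReal_ofReal', ← measureReal_def, ← measureReal_def, hgap, max_comm] at h
  have hreal := ENNReal.min_toReal_add_add_le diam_nonneg hK.measure_ne_top hWfin
    hL.measure_ne_top (hK.add hL).measure_ne_top hmain
  simp only [← measureReal_def] at hreal
  rcases min_cases (diam K) (volume.real K + W) with ⟨h, -⟩ | ⟨h, -⟩ <;>
  · rw [h] at hreal
    linarith [le_max_left 0 (diam K - diam L),
      min_le_left 0 (volume.real K - (diam L - volume.real L)),
      min_le_right 0 (volume.real K - (diam L - volume.real L))]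

end Compact

section Approximation

variable {X Y : Set ℝ}

lemma exists_isCompact_subset_approx (hXm : MeasurableSet X) (hXb : Bornology.IsBounded X)
    (hXne : X.Nonempty) {δ : ℝ} (hδ : 0 < δ) :
    ∃ K ⊆ X, IsCompact K ∧ K.Nonempty ∧ volume.real X ≤ volume.real K + δ ∧
      diam X ≤ diam K + δ := by
  obtain ⟨x₁, hx₁, h₁⟩ :=
    (csInf_lt_iff hXb.bddBelow hXne).1 (lt_add_of_pos_right _ (half_pos hδ))
  obtain ⟨x₂, hx₂, h₂⟩ := (lt_csSup_iff hXb.bddAbove hXne).1 (sub_lt_self _ (half_pos hδ))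
  obtain ⟨K, hxK, hKX, hK, hXK⟩ := hXm.exists_isCompact_finite_subset_lt_add
    (hXb.measure_lt_top (μ := volume)).ne (toFinite {x₁, x₂})
    (insert_subset hx₁ (singleton_subset_iff.2 hx₂)) (ENNReal.ofReal_pos.2 hδ).ne'
  have hx₁K : x₁ ∈ K := hxK (mem_insert _ _)
  have hx₂K : x₂ ∈ K := hxK (mem_insert_of_mem _ rfl)
  refine ⟨K, hKX, hK, ⟨x₁, hx₁K⟩, ?_, ?_⟩
  · have := ENNReal.toReal_mono (by simp [hK.measure_ne_top]) hXK.le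
    rwa [ENNReal.toReal_add hK.measure_ne_top ENNReal.ofReal_ne_top,
      ENNReal.toReal_ofReal hδ.le] at this
  · have := dist_le_diam_of_mem hK.isBounded hx₂K hx₁K
    rw [Real.dist_eq] at this
    rw [Real.diam_eq hXb]
    linarith [le_abs_self (x₂ - x₁)]

theorem le_measureReal_add_of_diam_le (hXm : MeasurableSet X) (hYm : MeasurableSet Y)
    (hXb : Bornology.IsBounded X) (hYb : Bornology.IsBounded Y) (hXne : X.Nonempty)
    (hYne : Y.Nonempty) (hd : diam X ≤ diam Y) :
    volume.real X + diam Y + min 0 (volume.real X - (diam Y - volume.real Y)) ≤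
        volume.real (X + Y) ∧
      diam X + volume.real Y + min 0 (volume.real X - (diam Y - volume.real Y)) ≤
        volume.real (X + Y) := by
  have key : ∀ ε > 0,
      volume.real X + diam Y + min 0 (volume.real X - (diam Y - volume.real Y)) ≤
          volume.real (X + Y) + ε ∧
        diam X + volume.real Y + min 0 (volume.real X - (diam Y - volume.real Y)) ≤
          volume.real (X + Y) + ε := by
    intro ε hε
    obtain ⟨K, hKX, hK, hKne, hXK, hdK⟩ :=
      exists_isCompact_subset_approx hXm hXb hXne (by positivity : 0 < ε / 6)
    obtain ⟨L, hLY, hL, hLne, hYL, hdL⟩ :=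
      exists_isCompact_subset_approx hYm hYb hYne (by positivity : 0 < ε / 6)
    have hKL := measureReal_mono (add_subset_add hKX hLY)
      ((hXb.add hYb).measure_lt_top (μ := volume)).ne
    have hmax : max 0 (diam K - diam L) ≤ ε / 6 :=
      max_le (by positivity) (by linarith [diam_mono hKX hXb])
    have hmin : min 0 (volume.real X - (diam Y - volume.real Y)) ≤
        min 0 (volume.real K - (diam L - volume.real L)) + 2 * (ε / 6) := by
      rw [← min_add_add_right]
      exact min_le_min (by positivity) (by linarith [diam_mono hLY hYb])
    exact ⟨by linarith [measureReal_add_diam_add_min_le_of_isCompact hK hL hKne hLne],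
      by linarith [diam_add_measureReal_add_min_le_of_isCompact hK hL hKne hLne]⟩
  exact ⟨le_of_forall_pos_le_add fun ε hε => (key ε hε).1,
    le_of_forall_pos_le_add fun ε hε => (key ε hε).2⟩

end Approximation

lemma Real.volume_convexHull {X : Set ℝ} (hX : Bornology.IsBounded X) :
    volume (convexHull ℝ X) = ENNReal.ofReal (diam X) := by
  refine le_antisymm ?_ ?_
  · calc volume (convexHull ℝ X) ≤ ediam (convexHull ℝ X) := Real.volume_le_diam _
      _ = ENNReal.ofReal (diam X) := by
          rw [convexHull_ediam, diam, ENNReal.ofReal_toReal hX.ediam_ne_top]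
  rcases X.eq_empty_or_nonempty with rfl | hne
  · simp
  calc ENNReal.ofReal (diam X) = volume (Ioo (sInf X) (sSup X)) := by
        rw [Real.volume_Ioo, Real.diam_eq hX]
    _ ≤ volume (convexHull ℝ X) := measure_mono fun t ht => by
        obtain ⟨x₁, hx₁, h₁⟩ := (csInf_lt_iff hX.bddBelow hne).1 ht.1
        obtain ⟨x₂, hx₂, h₂⟩ := (lt_csSup_iff hX.bddAbove hne).1 ht.2
        exact (convex_iff_ordConnected.1 (convex_convexHull ℝ X)).out
          (subset_convexHull ℝ X hx₁) (subset_convexHull ℝ X hx₂) ⟨h₁.le, h₂.le⟩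

theorem stmt_17 (X Y : Set ℝ) (hXne : X.Nonempty) (hYne : Y.Nonempty)
    (hXb : Bornology.IsBounded X) (hYb : Bornology.IsBounded Y)
    (hXm : MeasurableSet X) (hYm : MeasurableSet Y)
    (h : volume (convexHull ℝ X) ≤ volume (convexHull ℝ Y)) :
    2 * (volume X).toReal ≤ (volume (X + Y)).toReal ∧
    (volume X).toReal + (volume (convexHull ℝ Y)).toReal +
        min 0 ((volume X).toReal - (volume (convexHull ℝ Y \ Y)).toReal)
      ≤ (volume (X + Y)).toReal ∧
    (volume (convexHull ℝ X)).toReal + (volume Y).toReal +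
        min 0 ((volume X).toReal - (volume (convexHull ℝ Y \ Y)).toReal)
      ≤ (volume (X + Y)).toReal := by
  have hcoX := Real.volume_convexHull hXb
  have hcoY := Real.volume_convexHull hYb
  have hd : diam X ≤ diam Y := by
    rwa [hcoX, hcoY, ENNReal.ofReal_le_ofReal_iff diam_nonneg] at h
  have hgap : (volume (convexHull ℝ Y \ Y)).toReal = diam Y - volume.real Y := by
    rw [← measureReal_def, measureReal_sdiff (subset_convexHull ℝ Y) hYm (by simp [hcoY]),
      measureReal_def, hcoY, ENNReal.toReal_ofReal diam_nonneg]
  have hXd : volume.real X ≤ diam X := by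
    have := ENNReal.toReal_mono ENNReal.ofReal_ne_top
      ((measure_mono (subset_convexHull ℝ X)).trans hcoX.le)
    rwa [ENNReal.toReal_ofReal diam_nonneg] at this
  obtain ⟨hii, hiii⟩ := le_measureReal_add_of_diam_le hXm hYm hXb hYb hXne hYne hd
  rw [hcoX, hcoY, hgap, ENNReal.toReal_ofReal diam_nonneg, ENNReal.toReal_ofReal diam_nonneg]
  simp only [← measureReal_def]
  refine ⟨?_, hii, hiii⟩
  rcases min_cases 0 (volume.real X - (diam Y - volume.real Y)) with ⟨hmin, -⟩ | ⟨hmin, -⟩ <;>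
  · rw [hmin] at hii
    linarith [measureReal_nonneg (μ := volume) (s := Y)]
end
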